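/- arXiv:1507.02645 — 5 statements merged into one kernel-verified Lean document; each statement's English description precedes it below -/
import Mathlib

section
/- Let P be the grid lattice Fin m × Fin n (product order), and suppose s : P → ℕ is monotone and satisfies s(q₁ ⊓ q₂) = min(s(q₁), s(q₂)) for all q₁, q₂ ∈ P that cover their meet; then for all pairs x, y ∈ P (not just covering pairs) one has s(x ⊓ y) = min(s(x), s(y)). -/
private lemma fin_covBy_succ {m : ℕ} (c : Fin m) (h : c.val + 1 < m) :
    c ⋖ (⟨c.val + 1, h⟩ : Fin m) := by
  rw [← Fin.coe_covBy_iff]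
  exact (Nat.covBy_iff_add_one_eq.2 rfl : (c : ℕ) ⋖ c.val + 1)

private lemma key_lemma {m n : ℕ} (s : Fin m × Fin n → ℕ) (hmono : Monotone s)
    (hmin : ∀ p q₁ q₂ : Fin m × Fin n, q₁ ≠ q₂ → p ⋖ q₁ → p ⋖ q₂ →
      s p = min (s q₁) (s q₂)) :
    ∀ k : ℕ, ∀ (a c : Fin m) (b d : Fin n),
      (a.val - c.val) + (d.val - b.val) ≤ k → c ≤ a → b ≤ d →
      min (s (a, b)) (s (c, d)) ≤ s (c, b) := by
  intro k
  induction k with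
  | zero =>
    intro a c b d hk hca hbd
    have h1 : a = c := Fin.le_antisymm (by omega) hca
    subst h1
    exact min_le_left _ _
  | succ k ih =>
    intro a c b d hk hca hbd
    rcases eq_or_lt_of_le hca with h1 | h1
    · subst h1; exact min_le_left _ _
    rcases eq_or_lt_of_le hbd with h2 | h2
    · subst h2; exact min_le_right _ _
    have hc1 : c.val + 1 < m := lt_of_le_of_lt h1 a.isLt
    have hb1 : b.val + 1 < n := lt_of_le_of_lt h2 d.isLt
    set c' : Fin m := ⟨c.val + 1, hc1⟩ with hc'
    set b' : Fin n := ⟨b.val + 1, hb1⟩ with hb'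
    have cov1 : ((c, b) : Fin m × Fin n) ⋖ (c', b) :=
      Prod.mk_covBy_mk_iff_left.2 (fin_covBy_succ c hc1)
    have cov2 : ((c, b) : Fin m × Fin n) ⋖ (c, b') :=
      Prod.mk_covBy_mk_iff_right.2 (fin_covBy_succ b hb1)
    have hne : ((c', b) : Fin m × Fin n) ≠ (c, b') := by
      intro h; injection h with h1 h2
      exact absurd (congrArg Fin.val h1) (by simp [hc'])
    have heq := hmin (c, b) (c', b) (c, b') hne cov1 cov2
    rw [heq]
    have ih1 : min (s (a, b)) (s (c', d)) ≤ s (c', b) :=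
      ih a c' b d (by simp [hc']; omega) (by simpa [Fin.le_def, hc'] using h1) hbd
    have ih2 : min (s (a, b')) (s (c, d)) ≤ s (c, b') :=
      ih a c b' d (by simp [hb']; omega) hca (by simpa [Fin.le_def, hb'] using h2)
    have m1 : s (c, d) ≤ s (c', d) := hmono (by simp [Prod.le_def, Fin.le_def, hc'])
    have m2 : s (a, b) ≤ s (a, b') := hmono (by simp [Prod.le_def, Fin.le_def, hb'])
    omega

/-- On a grid lattice `Fin m × Fin n`, a monotone function satisfying the local min
rule at covering pairs satisfies the min rule for all pairs: `s (x ⊓ y) = min (s x) (s y)`. -/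
theorem stmt_1 {m n : ℕ} (s : Fin m × Fin n → ℕ) (hmono : Monotone s)
    (hmin : ∀ p q₁ q₂ : Fin m × Fin n, q₁ ≠ q₂ → p ⋖ q₁ → p ⋖ q₂ →
      s p = min (s q₁) (s q₂)) :
    ∀ x y : Fin m × Fin n, s (x ⊓ y) = min (s x) (s y) := by
  intro x y
  refine le_antisymm (le_min (hmono inf_le_left) (hmono inf_le_right)) ?_
  obtain ⟨x1, x2⟩ := x
  obtain ⟨y1, y2⟩ := y
  have hinf : ((x1, x2) : Fin m × Fin n) ⊓ (y1, y2) = (x1 ⊓ y1, x2 ⊓ y2) := rfl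
  rw [hinf]
  rcases le_total x1 y1 with h1 | h1 <;> rcases le_total x2 y2 with h2 | h2
  · rw [inf_eq_left.2 h1, inf_eq_left.2 h2]; exact min_le_left _ _
  · rw [inf_eq_left.2 h1, inf_eq_right.2 h2]
    have := key_lemma s hmono hmin ((y1.val - x1.val) + (x2.val - y2.val)) y1 x1 y2 x2
      le_rfl h1 h2
    rw [min_comm]; exact this
  · rw [inf_eq_right.2 h1, inf_eq_left.2 h2]
    exact key_lemma s hmono hmin ((x1.val - y1.val) + (y2.val - x2.val)) x1 y1 x2 y2
      le_rfl h1 h2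
  · rw [inf_eq_right.2 h1, inf_eq_right.2 h2]; exact min_le_right _ _
end

section
/- Let P be a finite poset, and suppose c₀, c₁, c₂ ∈ P are such that c₁ ≠ c₂, both c₁ and c₂ cover c₀, and the down-sets satisfy ↓c₁ ∩ ↓c₂ = ↓c₀ (where ↓c = {x : x ≤ c}). Let T : P → ℕ be finitely supported with support contained in a chain, and define s(c) = Σ_{x ≤ c} T(x). Then s(c₀) = min(s(c₁), s(c₂)). -/
/-- Lemma 1 of the paper, abstractly: if `T : P → ℕ` has chain support,
`s c = ∑_{x ≤ c} T x`, and `↓c₁ ∩ ↓c₂ = ↓c₀` for distinct `c₁, c₂` above `c₀`, then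
`s c₀ = min (s c₁) (s c₂)`. -/
theorem stmt_3 {P : Type*} [Fintype P] [PartialOrder P]
    [DecidableRel ((· ≤ ·) : P → P → Prop)]
    (T : P → ℕ) (hchain : ∀ x y : P, 0 < T x → 0 < T y → x ≤ y ∨ y ≤ x)
    (c₀ c₁ c₂ : P) (hne : c₁ ≠ c₂) (h₁ : c₀ ≤ c₁) (h₂ : c₀ ≤ c₂)
    (hcap : ∀ x : P, x ≤ c₁ ∧ x ≤ c₂ ↔ x ≤ c₀) :
    (∑ x ∈ Finset.univ.filter (· ≤ c₀), T x)
      = min (∑ x ∈ Finset.univ.filter (· ≤ c₁), T x)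
          (∑ x ∈ Finset.univ.filter (· ≤ c₂), T x) := by
  classical
  have hsub₁ : Finset.univ.filter (· ≤ c₀) ⊆ Finset.univ.filter (· ≤ c₁) := by
    intro x hx
    simp only [Finset.mem_filter, Finset.mem_univ, true_and] at *
    exact hx.trans h₁
  have hsub₂ : Finset.univ.filter (· ≤ c₀) ⊆ Finset.univ.filter (· ≤ c₂) := by
    intro x hx
    simp only [Finset.mem_filter, Finset.mem_univ, true_and] at *
    exact hx.trans h₂
  have hle₁ : (∑ x ∈ Finset.univ.filter (· ≤ c₀), T x)
      ≤ ∑ x ∈ Finset.univ.filter (· ≤ c₁), T x :=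
    Finset.sum_le_sum_of_subset hsub₁
  have hle₂ : (∑ x ∈ Finset.univ.filter (· ≤ c₀), T x)
      ≤ ∑ x ∈ Finset.univ.filter (· ≤ c₂), T x :=
    Finset.sum_le_sum_of_subset hsub₂
  have key : (∀ x, 0 < T x → x ≤ c₁ → x ≤ c₀) ∨ (∀ x, 0 < T x → x ≤ c₂ → x ≤ c₀) := by
    by_cases h : ∀ x, 0 < T x → x ≤ c₁ → x ≤ c₀
    · exact Or.inl h
    · push_neg at h
      obtain ⟨a, ha, hac₁, hac₀⟩ := h
      refine Or.inr fun y hy hyc₂ => ?_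
      rcases hchain a y ha hy with hay | hya
      · exact absurd ((hcap a).1 ⟨hac₁, hay.trans hyc₂⟩) hac₀
      · exact (hcap y).1 ⟨hya.trans hac₁, hyc₂⟩
  rcases key with h | h
  · have heq : (∑ x ∈ Finset.univ.filter (· ≤ c₀), T x)
        = ∑ x ∈ Finset.univ.filter (· ≤ c₁), T x := by
      refine Finset.sum_subset hsub₁ fun x hx hx' => ?_
      simp only [Finset.mem_filter, Finset.mem_univ, true_and] at hx hx'
      by_contra hT
      exact hx' (h x (Nat.pos_of_ne_zero hT) hx)
    rw [heq] at hle₂ ⊢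
    exact (min_eq_left hle₂).symm
  · have heq : (∑ x ∈ Finset.univ.filter (· ≤ c₀), T x)
        = ∑ x ∈ Finset.univ.filter (· ≤ c₂), T x := by
      refine Finset.sum_subset hsub₂ fun x hx hx' => ?_
      simp only [Finset.mem_filter, Finset.mem_univ, true_and] at hx hx'
      by_contra hT
      exact hx' (h x (Nat.pos_of_ne_zero hT) hx)
    rw [heq] at hle₁ ⊢
    exact (min_eq_right hle₁).symm
end

section
/- Under the hypotheses of the previous setting (finite poset P, c₀ covered by distinct c₁, c₂ with ↓c₁ ∩ ↓c₂ = ↓c₀), the key combinatorial step holds: no element of ↓c₁ \ ↓c₀ is comparable with any element of ↓c₂ \ ↓c₀. Consequently a chain in P cannot meet both ↓c₁ \ ↓c₀ and ↓c₂ \ ↓c₀. -/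
/-- Key step in Lemma 1 of the paper: if `↓c₁ ∩ ↓c₂ = ↓c₀`, then elements of
`↓c₁ \ ↓c₀` and `↓c₂ \ ↓c₀` are pairwise incomparable; hence no chain meets both sets. -/
theorem stmt_4 {P : Type*} [Fintype P] [PartialOrder P]
    (c₀ c₁ c₂ : P) (hne : c₁ ≠ c₂) (h₁ : c₀ ≤ c₁) (h₂ : c₀ ≤ c₂)
    (hcap : ∀ x : P, x ≤ c₁ ∧ x ≤ c₂ ↔ x ≤ c₀) :
    (∀ x₁ x₂ : P, x₁ ≤ c₁ → ¬ x₁ ≤ c₀ → x₂ ≤ c₂ → ¬ x₂ ≤ c₀ →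
      ¬ x₁ ≤ x₂ ∧ ¬ x₂ ≤ x₁) ∧
    ∀ S : Set P, IsChain (· ≤ ·) S →
      ¬ ((∃ x₁ ∈ S, x₁ ≤ c₁ ∧ ¬ x₁ ≤ c₀) ∧ (∃ x₂ ∈ S, x₂ ≤ c₂ ∧ ¬ x₂ ≤ c₀)) := by
  have key : ∀ x₁ x₂ : P, x₁ ≤ c₁ → ¬ x₁ ≤ c₀ → x₂ ≤ c₂ → ¬ x₂ ≤ c₀ →
      ¬ x₁ ≤ x₂ ∧ ¬ x₂ ≤ x₁ := by
    intro x₁ x₂ hx₁ hx₁' hx₂ hx₂'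
    constructor
    · intro h
      exact hx₁' ((hcap x₁).1 ⟨hx₁, h.trans hx₂⟩)
    · intro h
      exact hx₂' ((hcap x₂).1 ⟨h.trans hx₁, hx₂⟩)
  refine ⟨key, ?_⟩
  rintro S hS ⟨⟨x₁, hx₁S, hx₁, hx₁'⟩, ⟨x₂, hx₂S, hx₂, hx₂'⟩⟩
  obtain ⟨k1, k2⟩ := key x₁ x₂ hx₁ hx₁' hx₂ hx₂'
  rcases eq_or_ne x₁ x₂ with rfl | h
  · exact k1 le_rfl
  · rcases hS hx₁S hx₂S h with h | h
    · exact k1 h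
    · exact k2 h
end

section
/- In the extension construction of the previous statement, the extended function s defined inductively by s(x) = min(s(y₁), s(y₂)) at in-degree-2 nodes automatically satisfies monotonicity: if x ≤ z in P \ {⊤} then s(x) ≤ s(z). In particular, verification of monotonicity on B alone suffices. -/
/-- Proposition 2 of the paper, monotonicity step: any function on `P \ {⊤}` agreeing
with a monotone assignment on the one-cover nodes `B` and satisfying the min rule at
two-cover nodes is automatically monotone. -/
theorem stmt_7 {P : Type*} [Fintype P] [PartialOrder P] [OrderTop P]
    (ρ : P → ℕ) (hρ : ∀ x y : P, x ⋖ y → ρ y = ρ x + 1)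
    (hcov : ∀ x : P, x ≠ ⊤ → ∃ y₁ y₂ : P, x ⋖ y₁ ∧ x ⋖ y₂ ∧ ∀ y : P, x ⋖ y → y = y₁ ∨ y = y₂)
    (hmeet : ∀ x y₁ y₂ : P, y₁ ≠ y₂ → x ⋖ y₁ → x ⋖ y₂ →
      ∀ z : P, z ≤ y₁ → z ≤ y₂ → z ≤ x)
    (sbar : {z : P // z ≠ ⊤} → ℕ)
    (hsbar : ∀ b₁ b₂ : {z : P // z ≠ ⊤},
      (∀ y₁ y₂ : {z : P // z ≠ ⊤}, b₁ ⋖ y₁ → b₁ ⋖ y₂ → y₁ = y₂) →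
      (∀ y₁ y₂ : {z : P // z ≠ ⊤}, b₂ ⋖ y₁ → b₂ ⋖ y₂ → y₁ = y₂) →
      b₁ ≤ b₂ → sbar b₁ ≤ sbar b₂)
    (s : {z : P // z ≠ ⊤} → ℕ)
    (hsB : ∀ b : {z : P // z ≠ ⊤},
      (∀ y₁ y₂ : {z : P // z ≠ ⊤}, b ⋖ y₁ → b ⋖ y₂ → y₁ = y₂) → s b = sbar b)
    (hsmin : ∀ x y₁ y₂ : {z : P // z ≠ ⊤}, y₁ ≠ y₂ → x ⋖ y₁ → x ⋖ y₂ →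
      s x = min (s y₁) (s y₂)) :
    Monotone s := by
  haveI : Finite {z : P // z ≠ ⊤} := Subtype.finite
  haveI : WellFoundedGT {z : P // z ≠ ⊤} := Finite.to_wellFoundedGT
  haveI : WellFoundedLT {z : P // z ≠ ⊤} := Finite.to_wellFoundedLT
  haveI : IsStronglyAtomic {z : P // z ≠ ⊤} :=
    IsStronglyAtomic.of_wellFounded_lt wellFounded_lt
  -- transfer covers between the subtype and P
  have covQP : ∀ x w : {z : P // z ≠ ⊤}, x ⋖ w → x.1 ⋖ w.1 := by
    rintro ⟨x, hx⟩ ⟨w, hw⟩ h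
    refine ⟨h.lt, fun u hxu huw => ?_⟩
    have hu : u ≠ ⊤ := by
      rintro rfl
      exact hw (top_le_iff.mp huw.le)
    exact h.2 (c := ⟨u, hu⟩) (Subtype.mk_lt_mk.mpr hxu) (Subtype.mk_lt_mk.mpr huw)
  have covPQ : ∀ x w : {z : P // z ≠ ⊤}, x.1 ⋖ w.1 → x ⋖ w := by
    rintro ⟨x, hx⟩ ⟨w, hw⟩ h
    exact ⟨Subtype.mk_lt_mk.mpr h.lt,
      fun u hxu huw => h.2 (Subtype.mk_lt_mk.mp hxu) (Subtype.mk_lt_mk.mp huw)⟩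
  -- the dichotomy: every element is a one-cover node or has exactly two covers
  have dich : ∀ x : {z : P // z ≠ ⊤},
      (∀ y₁ y₂ : {z : P // z ≠ ⊤}, x ⋖ y₁ → x ⋖ y₂ → y₁ = y₂) ∨
      ∃ y₁ y₂ : {z : P // z ≠ ⊤}, y₁ ≠ y₂ ∧ x ⋖ y₁ ∧ x ⋖ y₂ ∧
        ∀ w : {z : P // z ≠ ⊤}, x ⋖ w → w = y₁ ∨ w = y₂ := by
    intro x
    obtain ⟨y₁, y₂, h₁, h₂, huniq⟩ := hcov x.1 x.2
    by_cases hne : y₁ = y₂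
    · left
      intro w₁ w₂ hw₁ hw₂
      have e₁ := huniq _ (covQP _ _ hw₁)
      have e₂ := huniq _ (covQP _ _ hw₂)
      subst hne
      apply Subtype.ext
      rcases e₁ with e | e <;> rcases e₂ with e' | e' <;> rw [e, e']
    · by_cases hy₁ : y₁ = ⊤
      · exfalso
        subst hy₁
        exact h₁.2 h₂.lt (lt_top_iff_ne_top.mpr (fun h => hne h.symm))
      · have hy₂ : y₂ ≠ ⊤ := by
          rintro rfl
          exact h₂.2 h₁.lt (lt_top_iff_ne_top.mpr hy₁)
        right
        refine ⟨⟨y₁, hy₁⟩, ⟨y₂, hy₂⟩, fun h => hne (congrArg Subtype.val h),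
          covPQ _ _ h₁, covPQ _ _ h₂, fun w hw => ?_⟩
        rcases huniq _ (covQP _ _ hw) with e | e
        · exact Or.inl (Subtype.ext e)
        · exact Or.inr (Subtype.ext e)
  -- key lemma : for a one-cover node b below x, sbar b ≤ s x
  have R : ∀ x : {z : P // z ≠ ⊤}, ∀ b : {z : P // z ≠ ⊤},
      (∀ y₁ y₂ : {z : P // z ≠ ⊤}, b ⋖ y₁ → b ⋖ y₂ → y₁ = y₂) →
      b ≤ x → sbar b ≤ s x := by
    intro x
    induction x using WellFoundedGT.induction with
    | _ x ih =>
      intro b hb hbx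
      rcases dich x with hone | ⟨y₁, y₂, hne, h₁, h₂, _⟩
      · rw [hsB x hone]
        exact hsbar b x hb hone hbx
      · rw [hsmin x y₁ y₂ hne h₁ h₂, le_min_iff]
        exact ⟨ih y₁ h₁.lt b hb (hbx.trans h₁.le), ih y₂ h₂.lt b hb (hbx.trans h₂.le)⟩
  -- main claim by downward induction
  have T : ∀ x z : {z : P // z ≠ ⊤}, x ≤ z → s x ≤ s z := by
    intro x
    induction x using WellFoundedGT.induction with
    | _ x ih =>
      intro z hxz
      rcases eq_or_lt_of_le hxz with rfl | hlt
      · exact le_refl _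
      rcases dich x with hone | ⟨y₁, y₂, hne, h₁, h₂, huniq⟩
      · rw [hsB x hone]
        exact R z x hone hlt.le
      · obtain ⟨w, hxw, hwz⟩ := exists_covBy_le_of_lt hlt
        have hsw : s x ≤ s w := by
          rw [hsmin x y₁ y₂ hne h₁ h₂]
          rcases huniq w hxw with rfl | rfl
          · exact min_le_left _ _
          · exact min_le_right _ _
        exact hsw.trans (ih w hxw.lt z hwz)
  exact fun a b h => T a b h
end

section
/- Chain-support contradiction lemma: Let P be a finite meet-semilattice and s : P → ℕ a path-consistent function (monotone and satisfying the min rule at meets of covering pairs, hence s(c₁ ⊓ c₂) = min(s(c₁), s(c₂)) for all incomparable c₁, c₂). Define n : P → ℤ as the inverse zeta transform of s, so that s(c) = Σ_{x ≤ c} n(x). If n(c₁) > 0 and n(c₂) > 0 for incomparable c₁, c₂, then s(c₁ ⊓ c₂) < min(s(c₁), s(c₂)), contradicting path-consistency; hence the support of n is a chain. -/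
/-- Chain-support lemma (induction step in Lemma 3 of the paper): if `s` is monotone
on a finite meet-semilattice with `s (c₁ ⊓ c₂) = min (s c₁) (s c₂)` for incomparable
`c₁, c₂`, and `n ≥ 0` satisfies `∑_{x ≤ c} n x = s c`, then the support of `n` is a
chain. -/
theorem stmt_10 {P : Type*} [Fintype P] [SemilatticeInf P]
    [DecidableRel ((· ≤ ·) : P → P → Prop)]
    (s : P → ℕ) (hmono : Monotone s)
    (hmin : ∀ c₁ c₂ : P, ¬ c₁ ≤ c₂ → ¬ c₂ ≤ c₁ → s (c₁ ⊓ c₂) = min (s c₁) (s c₂))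
    (n : P → ℤ) (hpos : ∀ c : P, 0 ≤ n c)
    (hn : ∀ c : P, ∑ x ∈ Finset.univ.filter (· ≤ c), n x = (s c : ℤ)) :
    ∀ c₁ c₂ : P, 0 < n c₁ → 0 < n c₂ → c₁ ≤ c₂ ∨ c₂ ≤ c₁ := by
  classical
  intro c₁ c₂ h₁ h₂
  by_contra h
  push_neg at h
  obtain ⟨h12, h21⟩ := h
  have key : ∀ a b : P, ¬ a ≤ b → 0 < n a → (s (a ⊓ b) : ℤ) < (s a : ℤ) := by
    intro a b hab ha
    rw [← hn a, ← hn (a ⊓ b)]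
    have hsub : Finset.univ.filter (· ≤ a ⊓ b) ⊆
        (Finset.univ.filter (· ≤ a)).erase a := by
      intro x hx
      simp only [Finset.mem_filter, Finset.mem_erase, Finset.mem_univ, true_and] at hx ⊢
      refine ⟨?_, hx.trans inf_le_left⟩
      rintro rfl
      exact hab (hx.trans inf_le_right)
    calc ∑ x ∈ Finset.univ.filter (· ≤ a ⊓ b), n x
        ≤ ∑ x ∈ (Finset.univ.filter (· ≤ a)).erase a, n x :=
          Finset.sum_le_sum_of_subset_of_nonneg hsub (fun x _ _ => hpos x)
      _ < ∑ x ∈ Finset.univ.filter (· ≤ a), n x := by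
          exact Finset.sum_erase_lt_of_pos (by simp) ha
  have k1 := key c₁ c₂ h12 h₁
  have k2 := key c₂ c₁ h21 h₂
  rw [inf_comm] at k2
  have := hmin c₁ c₂ h12 h21
  omega
end
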